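/- arXiv:1810.03483 — 2 statements merged into one kernel-verified Lean document; each statement's English description precedes it below -/
import Mathlib

section
/- Fix N ≥ 1 and k > 0, and let G : ℝ^N → ℝ^N be differentiable with each component G_i convex and each partial derivative ∂G_i/∂u_j locally Lipschitz. Let 0 < T < +∞ and let (M, U) : [0, T) → ℝ^N × ℝ^N be a differentiable solution of the discrete Hessian Riemannian flow with all components m_i(t) > 0 on [0, T), and suppose (M(t), U(t)) is bounded on [0, T). Then for every sequence t_i → T with (M(t_i), U(t_i)) → (M*, U*) ∈ ℝ^N × ℝ^N, every component of M* is strictly positive; that is, every limit point of the trajectory as t → T lies in (0,∞)^N × ℝ^N. -/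
open Filter

/-- The discrete entropy-penalized effective Hamiltonian
`H̃(M,U) = (∑ᵢ (mᵢ Gᵢ(U) − (1/k) mᵢ ln mᵢ)) / (∑ᵢ mᵢ)`. -/
noncomputable def Htilde {N : ℕ} (k : ℝ) (G : (Fin N → ℝ) → (Fin N → ℝ))
    (M U : Fin N → ℝ) : ℝ :=
  (∑ i, (M i * G U i - (1 / k) * (M i * Real.log (M i)))) / ∑ i, M i

/-- First block of `F̄(M,U)`: `(mᵢ(−Gᵢ(U) + H̃(M,U) + (1/k) ln mᵢ))ᵢ`. -/
noncomputable def Fbar1 {N : ℕ} (k : ℝ) (G : (Fin N → ℝ) → (Fin N → ℝ))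
    (M U : Fin N → ℝ) (i : Fin N) : ℝ :=
  M i * (-(G U i) + Htilde k G M U + (1 / k) * Real.log (M i))

/-- Second block of `F̄(M,U)`: the vector `DG(U)ᵀ M`. -/
noncomputable def Fbar2 {N : ℕ} (G : (Fin N → ℝ) → (Fin N → ℝ))
    (M U : Fin N → ℝ) (j : Fin N) : ℝ :=
  ∑ i, M i * (fderiv ℝ G U) (Pi.single j 1) i

/-!
Along the flow, `d/dt ln mᵢ = Gᵢ(U) − H̃(M,U) − (1/k) ln mᵢ`. The total mass `∑ mᵢ` is conserved,
so it stays equal to its positive initial value; together with `−x ln x ≤ 1` and the boundedness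
of `G` on the bounded trajectory this bounds `H̃` from above, while `mᵢ ≤ C` bounds `ln mᵢ` from
above. Hence `d/dt ln mᵢ` is bounded below, and since `T < ∞` so is `ln mᵢ` on `[0, T)`: the
components `mᵢ` stay above a fixed positive constant, which passes to every limit point.
-/

open Set Real

lemma eq_of_hasDerivAt_zero_Ico {f : ℝ → ℝ} {a b : ℝ}
    (hf : ∀ t ∈ Ico a b, HasDerivAt f 0 t) {t : ℝ} (ht : t ∈ Ico a b) : f t = f a :=
  constant_of_has_deriv_right_zero
    (fun s hs => (hf s ⟨hs.1, hs.2.trans_lt ht.2⟩).continuousAt.continuousWithinAt)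
    (fun s hs => (hf s ⟨hs.1, hs.2.trans ht.2⟩).hasDerivWithinAt) t ⟨ht.1, le_rfl⟩

lemma exists_forall_le_of_le_hasDerivAt_Ico {f f' : ℝ → ℝ} {a b K : ℝ}
    (hf : ∀ t ∈ Ico a b, HasDerivAt f (f' t) t) (hK : ∀ t ∈ Ico a b, K ≤ f' t) :
    ∃ L, ∀ t ∈ Ico a b, L ≤ f t := by
  refine ⟨f a - |K| * (b - a), fun t ht => ?_⟩
  have hinterior : interior (Ico a b) ⊆ Ico a b := interior_subset
  have hslope : K * (t - a) ≤ f t - f a :=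
    (convex_Ico a b).mul_sub_le_image_sub_of_le_deriv
      (fun s hs => (hf s hs).continuousAt.continuousWithinAt)
      (fun s hs => (hf s (hinterior hs)).differentiableAt.differentiableWithinAt)
      (fun s hs => (hf s (hinterior hs)).deriv ▸ hK s (hinterior hs))
      a ⟨le_rfl, ht.1.trans_lt ht.2⟩ t ht ht.1
  have hKt : -(|K| * (b - a)) ≤ K * (t - a) := by
    have : |K| * (t - a) ≤ |K| * (b - a) := by gcongr; exact ht.2.le
    nlinarith [neg_abs_le K, ht.1]
  linarith

section Flow

variable {N : ℕ} {k : ℝ} {G : (Fin N → ℝ) → (Fin N → ℝ)}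

lemma sum_Fbar1_eq_zero (m u : Fin N → ℝ) (hm : ∑ i, m i ≠ 0) :
    ∑ i, Fbar1 k G m u i = 0 := by
  have hH : Htilde k G m u * ∑ i, m i
      = ∑ i, (m i * G u i - (1 / k) * (m i * log (m i))) := by
    rw [Htilde, div_mul_cancel₀ _ hm]
  calc ∑ i, Fbar1 k G m u i
      = Htilde k G m u * ∑ i, m i - ∑ i, (m i * G u i - (1 / k) * (m i * log (m i))) := by
        rw [Finset.mul_sum, ← Finset.sum_sub_distrib]
        exact Finset.sum_congr rfl fun i _ => by rw [Fbar1]; ring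
    _ = 0 := by rw [hH, sub_self]

lemma neg_Fbar1_div_self (m u : Fin N → ℝ) {i : Fin N} (hm : m i ≠ 0) :
    -Fbar1 k G m u i / m i = G u i - Htilde k G m u - (1 / k) * log (m i) := by
  rw [Fbar1]
  field_simp
  ring

lemma Htilde_le (hk : 0 ≤ k) {m u : Fin N → ℝ} {c : ℝ} (hm : ∀ i, 0 ≤ m i)
    (hS : 0 < ∑ i, m i) (hG : ∀ i, G u i ≤ c) :
    Htilde k G m u ≤ c + N / (k * ∑ i, m i) := by
  rw [Htilde, div_le_iff₀ hS, add_mul, div_mul_eq_div_div, div_mul_cancel₀ _ hS.ne']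
  have hent : ∀ i, -(m i * log (m i)) ≤ 1 := fun i => by
    linarith [self_sub_one_le_mul_log (hm i), hm i]
  calc ∑ i, (m i * G u i - (1 / k) * (m i * log (m i)))
      = ∑ i, m i * G u i + (1 / k) * ∑ i, -(m i * log (m i)) := by
        rw [Finset.mul_sum, ← Finset.sum_add_distrib]
        exact Finset.sum_congr rfl fun i _ => by ring
    _ ≤ ∑ i, m i * c + (1 / k) * ∑ _i : Fin N, (1 : ℝ) := by
        gcongr with i _ i
        · exact hm i
        · exact hG i
        · exact hent i
    _ = c * ∑ i, m i + N / k := by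
        rw [← Finset.sum_mul, Finset.sum_const, Finset.card_univ, Fintype.card_fin]
        simp only [nsmul_eq_mul, mul_one]
        ring

variable {T : ℝ} {M U : ℝ → Fin N → ℝ}

lemma sum_flow_eq_sum_initial [Nonempty (Fin N)]
    (hflowM : ∀ t ∈ Ico (0 : ℝ) T, ∀ i,
      HasDerivAt (fun s => M s i) (-(Fbar1 k G (M t) (U t) i)) t)
    (hMpos : ∀ t ∈ Ico (0 : ℝ) T, ∀ i, 0 < M t i) {t : ℝ} (ht : t ∈ Ico 0 T) :
    ∑ i, M t i = ∑ i, M 0 i := by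
  refine eq_of_hasDerivAt_zero_Ico (f := fun s => ∑ i, M s i) (fun s hs => ?_) ht
  have hmass : ∑ i, M s i ≠ 0 :=
    (Finset.sum_pos (fun i _ => hMpos s hs i) Finset.univ_nonempty).ne'
  have h := HasDerivAt.fun_sum fun i (_ : i ∈ Finset.univ) => hflowM s hs i
  rwa [Finset.sum_neg_distrib, sum_Fbar1_eq_zero _ _ hmass, neg_zero] at h

lemma hasDerivAt_log_flow
    (hflowM : ∀ t ∈ Ico (0 : ℝ) T, ∀ i,
      HasDerivAt (fun s => M s i) (-(Fbar1 k G (M t) (U t) i)) t)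
    (hMpos : ∀ t ∈ Ico (0 : ℝ) T, ∀ i, 0 < M t i) {t : ℝ} (ht : t ∈ Ico 0 T) (i : Fin N) :
    HasDerivAt (fun s => log (M s i))
      (G (U t) i - Htilde k G (M t) (U t) - (1 / k) * log (M t i)) t := by
  rw [← neg_Fbar1_div_self _ _ (hMpos t ht i).ne']
  exact (hflowM t ht i).log (hMpos t ht i).ne'

lemma exists_le_logDeriv_flow [Nonempty (Fin N)] (hk : 0 < k) (hG : Continuous G)
    (hT0 : 0 < T)
    (hflowM : ∀ t ∈ Ico (0 : ℝ) T, ∀ i,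
      HasDerivAt (fun s => M s i) (-(Fbar1 k G (M t) (U t) i)) t)
    (hMpos : ∀ t ∈ Ico (0 : ℝ) T, ∀ i, 0 < M t i)
    (hbdd : ∃ C : ℝ, ∀ t ∈ Ico (0 : ℝ) T, ∀ i, |M t i| + |U t i| ≤ C) :
    ∃ K, ∀ t ∈ Ico (0 : ℝ) T, ∀ i,
      K ≤ G (U t) i - Htilde k G (M t) (U t) - (1 / k) * log (M t i) := by
  obtain ⟨C, hC⟩ := hbdd
  have hM_le : ∀ t ∈ Ico (0 : ℝ) T, ∀ i, M t i ≤ C := fun t ht i =>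
    (le_abs_self _).trans ((le_add_of_nonneg_right (abs_nonneg _)).trans (hC t ht i))
  have hC0 : 0 ≤ C := (abs_nonneg _).trans ((le_add_of_nonneg_left (abs_nonneg _)).trans
    (hC 0 ⟨le_rfl, hT0⟩ (Classical.arbitrary _)))
  have hU_mem : ∀ t ∈ Ico (0 : ℝ) T, U t ∈ Metric.closedBall 0 C := fun t ht => by
    rw [mem_closedBall_zero_iff, pi_norm_le_iff_of_nonneg hC0]
    exact fun i => (le_add_of_nonneg_left (abs_nonneg _)).trans (hC t ht i)
  obtain ⟨c, hc⟩ := (isCompact_closedBall (0 : Fin N → ℝ) C).exists_bound_of_continuousOn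
    hG.continuousOn
  have hG_abs : ∀ t ∈ Ico (0 : ℝ) T, ∀ i, |G (U t) i| ≤ c := fun t ht i =>
    (norm_le_pi_norm _ i).trans (hc _ (hU_mem t ht))
  set S := ∑ i, M 0 i
  have hS : 0 < S := Finset.sum_pos (fun i _ => hMpos 0 ⟨le_rfl, hT0⟩ i) Finset.univ_nonempty
  refine ⟨-c - (c + N / (k * S)) - (1 / k) * log C, fun t ht i => ?_⟩
  have hmass : ∑ i, M t i = S := sum_flow_eq_sum_initial hflowM hMpos ht
  have hH : Htilde k G (M t) (U t) ≤ c + N / (k * S) := by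
    rw [← hmass]
    exact Htilde_le hk.le (fun j => (hMpos t ht j).le) (hmass ▸ hS)
      (fun j => (le_abs_self _).trans (hG_abs t ht j))
  have hlog : (1 / k) * log (M t i) ≤ (1 / k) * log C := by
    gcongr
    exacts [hMpos t ht i, hM_le t ht i]
  linarith [neg_le_of_abs_le (hG_abs t ht i)]

end Flow

theorem discrete_HRF_limit_points_positive_general
    (N : ℕ) (k : ℝ) (hk : 0 < k)
    (G : (Fin N → ℝ) → (Fin N → ℝ))
    (hGdiff : Differentiable ℝ G)
    (T : ℝ) (hT0 : 0 < T)
    (M U : ℝ → Fin N → ℝ)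
    (hflowM : ∀ t ∈ Set.Ico (0 : ℝ) T, ∀ i,
      HasDerivAt (fun s => M s i) (-(Fbar1 k G (M t) (U t) i)) t)
    (hMpos : ∀ t ∈ Set.Ico (0 : ℝ) T, ∀ i, 0 < M t i)
    (hbdd : ∃ C : ℝ, ∀ t ∈ Set.Ico (0 : ℝ) T, ∀ i, |M t i| + |U t i| ≤ C) :
    ∀ (tseq : ℕ → ℝ) (Mlim Ulim : Fin N → ℝ),
      (∀ n, tseq n ∈ Set.Ico (0 : ℝ) T) →
      Tendsto tseq atTop (nhds T) →
      Tendsto (fun n => M (tseq n)) atTop (nhds Mlim) →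
      Tendsto (fun n => U (tseq n)) atTop (nhds Ulim) →
      ∀ i, 0 < Mlim i := by
  intro tseq Mlim Ulim htseq _ hMlim _ i
  have : Nonempty (Fin N) := ⟨i⟩
  obtain ⟨K, hK⟩ := exists_le_logDeriv_flow hk hGdiff.continuous hT0 hflowM hMpos hbdd
  obtain ⟨L, hL⟩ := exists_forall_le_of_le_hasDerivAt_Ico
    (fun t ht => hasDerivAt_log_flow hflowM hMpos ht i) (fun t ht => hK t ht i)
  have hlim : Tendsto (fun n => M (tseq n) i) atTop (nhds (Mlim i)) :=
    ((continuous_apply i).tendsto Mlim).comp hMlim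
  refine (exp_pos L).trans_le (ge_of_tendsto' hlim fun n => ?_)
  calc exp L ≤ exp (log (M (tseq n) i)) := exp_le_exp.mpr (hL _ (htseq n))
    _ = M (tseq n) i := exp_log (hMpos _ (htseq n) i)

/-- for a bounded positive solution of the discrete Hessian Riemannian flow on
`[0,T)`, `T < ∞`, every limit point of the trajectory as `t → T` lies in `(0,∞)^N × ℝ^N`:
all components of the `M`-part of any limit point are strictly positive. -/
theorem discrete_HRF_limit_points_positive
    (N : ℕ) (hN : 1 ≤ N) (k : ℝ) (hk : 0 < k)
    (G : (Fin N → ℝ) → (Fin N → ℝ))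
    (hGdiff : Differentiable ℝ G)
    (hGconv : ∀ i : Fin N, ConvexOn ℝ Set.univ (fun U => G U i))
    (hGlip : ∀ i j : Fin N, LocallyLipschitz (fun U => (fderiv ℝ G U) (Pi.single j 1) i))
    (T : ℝ) (hT0 : 0 < T)
    (M U : ℝ → Fin N → ℝ)
    (hflowM : ∀ t ∈ Set.Ico (0 : ℝ) T, ∀ i,
      HasDerivAt (fun s => M s i) (-(Fbar1 k G (M t) (U t) i)) t)
    (hflowU : ∀ t ∈ Set.Ico (0 : ℝ) T, ∀ i,
      HasDerivAt (fun s => U s i) (-(Fbar2 G (M t) (U t) i)) t)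
    (hMpos : ∀ t ∈ Set.Ico (0 : ℝ) T, ∀ i, 0 < M t i)
    (hbdd : ∃ C : ℝ, ∀ t ∈ Set.Ico (0 : ℝ) T, ∀ i, |M t i| + |U t i| ≤ C) :
    ∀ (tseq : ℕ → ℝ) (Mlim Ulim : Fin N → ℝ),
      (∀ n, tseq n ∈ Set.Ico (0 : ℝ) T) →
      Tendsto tseq atTop (nhds T) →
      Tendsto (fun n => M (tseq n)) atTop (nhds Mlim) →
      Tendsto (fun n => U (tseq n)) atTop (nhds Ulim) →
      ∀ i, 0 < Mlim i :=
  discrete_HRF_limit_points_positive_general N k hk G hGdiff T hT0 M U hflowM hMpos hbdd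
end

section
/- Fix N ≥ 1 and k > 0, and let G : ℝ^N → ℝ^N be differentiable and translation invariant: G_i(U + s·𝟙) = G_i(U) for all U ∈ ℝ^N, s ∈ ℝ and 1 ≤ i ≤ N, where 𝟙 = (1,…,1) ∈ ℝ^N. Then DG(U)·𝟙 = 0 for every U, and hence for every M ∈ ℝ^N, Σ_{j=1}^N (DG(U)ᵀ M)_j = 0. Consequently, along any differentiable solution (M(t), U(t)) of the discrete Hessian Riemannian flow with all m_j(t) > 0, the sum Σ_{j=1}^N u_j(t) is constant in t. -/
open Finset

theorem fderiv_apply_eq_zero_of_forall_add_smul_eq {𝕜 E F : Type*} [NontriviallyNormedField 𝕜]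
    [NormedAddCommGroup E] [NormedSpace 𝕜 E] [NormedAddCommGroup F] [NormedSpace 𝕜 F]
    {G : E → F} {x v : E} (hG : DifferentiableAt 𝕜 G x) (h : ∀ s : 𝕜, G (x + s • v) = G x) :
    fderiv 𝕜 G x v = 0 := by
  rw [← hG.lineDeriv_eq_fderiv, lineDeriv]
  simp [h]

theorem sum_Fbar2_eq {N : ℕ} (G : (Fin N → ℝ) → (Fin N → ℝ)) (M U : Fin N → ℝ) :
    ∑ j, Fbar2 G M U j = ∑ i, M i * fderiv ℝ G U (fun _ => 1) i := by
  simp only [Fbar2]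
  rw [sum_comm]
  refine sum_congr rfl fun i _ => ?_
  rw [← mul_sum, ← Finset.sum_apply, ← map_sum, univ_sum_single]

theorem eq_of_forall_nonneg_hasDerivAt_zero {E : Type*} [NormedAddCommGroup E] [NormedSpace ℝ E]
    {f : ℝ → E} (hf : ∀ t, 0 ≤ t → HasDerivAt f 0 t) {t : ℝ} (ht : 0 ≤ t) : f t = f 0 :=
  constant_of_has_deriv_right_zero
    (fun x hx => (hf x hx.1).continuousAt.continuousWithinAt)
    (fun x hx => (hf x hx.1).hasDerivWithinAt) t ⟨ht, le_rfl⟩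

theorem discrete_HRF_u_sum_conservation_general
    (N : ℕ) (k : ℝ)
    (G : (Fin N → ℝ) → (Fin N → ℝ))
    (hGdiff : Differentiable ℝ G)
    (hGtrans : ∀ (U : Fin N → ℝ) (s : ℝ) (i : Fin N), G (U + fun _ => s) i = G U i) :
    (∀ U : Fin N → ℝ, (fderiv ℝ G U) (fun _ => 1) = 0) ∧
    (∀ (M U : Fin N → ℝ), ∑ j, Fbar2 G M U j = 0) ∧
    (∀ (M U : ℝ → Fin N → ℝ),
      (∀ t, 0 ≤ t → ∀ i, 0 < M t i) →
      (∀ t, 0 ≤ t → ∀ i,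
        HasDerivAt (fun s => M s i) (-(Fbar1 k G (M t) (U t) i)) t ∧
        HasDerivAt (fun s => U s i) (-(Fbar2 G (M t) (U t) i)) t) →
      ∀ t, 0 ≤ t → ∑ j, U t j = ∑ j, U 0 j) := by
  have hDG : ∀ U : Fin N → ℝ, fderiv ℝ G U (fun _ => 1) = 0 := fun U =>
    fderiv_apply_eq_zero_of_forall_add_smul_eq (hGdiff U) fun s => by
      ext i
      simpa [Pi.smul_def] using hGtrans U s i
  have hFbar2 : ∀ M U : Fin N → ℝ, ∑ j, Fbar2 G M U j = 0 := fun M U => by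
    simp [sum_Fbar2_eq, hDG]
  refine ⟨hDG, hFbar2, fun M U _ hflow t ht => ?_⟩
  refine eq_of_forall_nonneg_hasDerivAt_zero (f := fun s => ∑ j, U s j) (fun x hx => ?_) ht
  have hsum := HasDerivAt.fun_sum fun j (_ : j ∈ univ) => (hflow x hx j).2
  rwa [sum_neg_distrib, hFbar2, neg_zero] at hsum

/-- if `G` is translation invariant, `G(U + s𝟙) = G(U)`, then `DG(U)𝟙 = 0`,
hence `∑ⱼ (DG(U)ᵀ M)ⱼ = 0` for all `M`; consequently `∑ⱼ uⱼ(t)` is constant along any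
positive solution of the discrete Hessian Riemannian flow on `[0,∞)`. -/
theorem discrete_HRF_u_sum_conservation
    (N : ℕ) (hN : 1 ≤ N) (k : ℝ) (hk : 0 < k)
    (G : (Fin N → ℝ) → (Fin N → ℝ))
    (hGdiff : Differentiable ℝ G)
    (hGtrans : ∀ (U : Fin N → ℝ) (s : ℝ) (i : Fin N), G (U + fun _ => s) i = G U i) :
    (∀ U : Fin N → ℝ, (fderiv ℝ G U) (fun _ => 1) = 0) ∧
    (∀ (M U : Fin N → ℝ), ∑ j, Fbar2 G M U j = 0) ∧
    (∀ (M U : ℝ → Fin N → ℝ),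
      (∀ t, 0 ≤ t → ∀ i, 0 < M t i) →
      (∀ t, 0 ≤ t → ∀ i,
        HasDerivAt (fun s => M s i) (-(Fbar1 k G (M t) (U t) i)) t ∧
        HasDerivAt (fun s => U s i) (-(Fbar2 G (M t) (U t) i)) t) →
      ∀ t, 0 ≤ t → ∑ j, U t j = ∑ j, U 0 j) :=
  discrete_HRF_u_sum_conservation_general N k G hGdiff hGtrans
end
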